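/- Let 𝔞 be a 𝒰-graded category and let φ_1 : 𝒱_1 ⊆ 𝒰 and φ_2 : 𝒱_2 ⊆ 𝒰 be subcategories which together constitute an ∞-cover of 𝒰 (for every natural number k, every k-simplex of 𝒩(𝒰) lies in the image of 𝒩_k(𝒱_1) or of 𝒩_k(𝒱_2)). Let 𝒱_1 ∩ 𝒱_2 be the intersection category (objects Ob(𝒱_1) ∩ Ob(𝒱_2), morphisms 𝒱_1(V,V') ∩ 𝒱_2(V,V')), with inclusions φ : 𝒱_1 ∩ 𝒱_2 ⊆ 𝒰 and α_i : 𝒱_1 ∩ 𝒱_2 ⊆ 𝒱_i. Then the Mayer–Vietoris sequence of complexes 0 → C_𝒰(𝔞) → C_{𝒱_1}(𝔞^{φ_1}) ⊕ C_{𝒱_2}(𝔞^{φ_2}) → C_{𝒱_1 ∩ 𝒱_2}(𝔞^{φ}) → 0, with first map (φ_1^*, φ_2^*) and second map (−α_1^*, α_2^*), is exact. -/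

import Mathlib

open CategoryTheory

universe u

namespace MapGr

variable (k : Type u) [CommRing k]

/-- A (`k`-linear) map-graded category `(𝒰, 𝔞)`: a set `𝔞_U` of objects over every
`U ∈ 𝒰`, a `k`-module `𝔞_u(B, A)` of morphisms over every `u : U ⟶ U'` in `𝒰`, together
with associative, unital, `k`-bilinear composition maps. -/
structure GradedCat (𝒰 : Type u) [Category.{u} 𝒰] : Type (u + 1) where
  Obj : 𝒰 → Type u
  Hom : ∀ {X Y : 𝒰}, (X ⟶ Y) → Obj X → Obj Y → ModuleCat.{u} k
  comp : ∀ {X Y Z : 𝒰} {f : Y ⟶ Z} {g : X ⟶ Y} {C : Obj X} {B : Obj Y} {A : Obj Z},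
    Hom f B A → Hom g C B → Hom (g ≫ f) C A
  id : ∀ {X : 𝒰} (A : Obj X), Hom (𝟙 X) A A
  comp_add_left : ∀ {X Y Z : 𝒰} {f : Y ⟶ Z} {g : X ⟶ Y} {C : Obj X} {B : Obj Y}
    {A : Obj Z} (x x' : Hom f B A) (y : Hom g C B),
    comp (x + x') y = comp x y + comp x' y
  comp_add_right : ∀ {X Y Z : 𝒰} {f : Y ⟶ Z} {g : X ⟶ Y} {C : Obj X} {B : Obj Y}
    {A : Obj Z} (x : Hom f B A) (y y' : Hom g C B),
    comp x (y + y') = comp x y + comp x y'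
  comp_smul_left : ∀ {X Y Z : 𝒰} {f : Y ⟶ Z} {g : X ⟶ Y} {C : Obj X} {B : Obj Y}
    {A : Obj Z} (r : k) (x : Hom f B A) (y : Hom g C B),
    comp (r • x) y = r • comp x y
  comp_smul_right : ∀ {X Y Z : 𝒰} {f : Y ⟶ Z} {g : X ⟶ Y} {C : Obj X} {B : Obj Y}
    {A : Obj Z} (r : k) (x : Hom f B A) (y : Hom g C B),
    comp x (r • y) = r • comp x y
  comp_id : ∀ {X Y : 𝒰} {f : X ⟶ Y} {B : Obj X} {A : Obj Y} (x : Hom f B A),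
    HEq (comp x (id B)) x
  id_comp : ∀ {X Y : 𝒰} {f : X ⟶ Y} {B : Obj X} {A : Obj Y} (x : Hom f B A),
    HEq (comp (id A) x) x
  assoc : ∀ {W X Y Z : 𝒰} {f : Y ⟶ Z} {g : X ⟶ Y} {h : W ⟶ X} {D : Obj W} {C : Obj X}
    {B : Obj Y} {A : Obj Z} (x : Hom f B A) (y : Hom g C B) (z : Hom h D C),
    HEq (comp (comp x y) z) (comp x (comp y z))

variable {k}
variable {𝒰 : Type u} [Category.{u} 𝒰]

namespace GradedCat

variable (𝔞 : GradedCat k 𝒰)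

/-- Transport of graded morphisms along an equality of underlying morphisms of `𝒰`. -/
def Hcast {X Y : 𝒰} {f g : X ⟶ Y} (h : f = g) {B : 𝔞.Obj X} {A : 𝔞.Obj Y}
    (x : 𝔞.Hom f B A) : 𝔞.Hom g B A :=
  _root_.cast (by rw [h]) x

theorem Hcast_heq {X Y : 𝒰} {f g : X ⟶ Y} (h : f = g) {B : 𝔞.Obj X} {A : 𝔞.Obj Y}
    (x : 𝔞.Hom f B A) : HEq (𝔞.Hcast h x) x :=
  cast_heq _ _

theorem Hcast_add {X Y : 𝒰} {f g : X ⟶ Y} (h : f = g) {B : 𝔞.Obj X} {A : 𝔞.Obj Y}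
    (x y : 𝔞.Hom f B A) : 𝔞.Hcast h (x + y) = 𝔞.Hcast h x + 𝔞.Hcast h y := by
  subst h; rfl

theorem Hcast_smul {X Y : 𝒰} {f g : X ⟶ Y} (h : f = g) {B : 𝔞.Obj X} {A : 𝔞.Obj Y}
    (r : k) (x : 𝔞.Hom f B A) : 𝔞.Hcast h (r • x) = r • 𝔞.Hcast h x := by
  subst h; rfl

theorem comp_congr {X Y Z : 𝒰} {f f' : Y ⟶ Z} (hf : f = f') {g g' : X ⟶ Y} (hg : g = g')
    {C : 𝔞.Obj X} {B : 𝔞.Obj Y} {A : 𝔞.Obj Z} {x : 𝔞.Hom f B A} {x' : 𝔞.Hom f' B A}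
    (hx : HEq x x') {y : 𝔞.Hom g C B} {y' : 𝔞.Hom g' C B} (hy : HEq y y') :
    HEq (𝔞.comp x y) (𝔞.comp x' y') := by
  subst hf; subst hg; rw [eq_of_heq hx, eq_of_heq hy]

end GradedCat

variable {𝒱 : Type u} [Category.{u} 𝒱]

/-- The `𝒱`-graded category `𝔞^φ` obtained by restricting a `𝒰`-graded category `𝔞`
along a functor `φ : 𝒱 ⥤ 𝒰`:  `(𝔞^φ)_V = 𝔞_{φ V}` and `(𝔞^φ)_v(A, A') = 𝔞_{φ v}(A, A')`. -/
def GradedCat.restrict (φ : 𝒱 ⥤ 𝒰) (𝔞 : GradedCat k 𝒰) : GradedCat k 𝒱 where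
  Obj V := 𝔞.Obj (φ.obj V)
  Hom f B A := 𝔞.Hom (φ.map f) B A
  comp x y := 𝔞.Hcast (φ.map_comp _ _).symm (𝔞.comp x y)
  id A := 𝔞.Hcast (φ.map_id _).symm (𝔞.id A)
  comp_add_left x x' y := by (try dsimp only); rw [𝔞.comp_add_left, 𝔞.Hcast_add]
  comp_add_right x y y' := by (try dsimp only); rw [𝔞.comp_add_right, 𝔞.Hcast_add]
  comp_smul_left r x y := by (try dsimp only); rw [𝔞.comp_smul_left, 𝔞.Hcast_smul]
  comp_smul_right r x y := by (try dsimp only); rw [𝔞.comp_smul_right, 𝔞.Hcast_smul]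
  comp_id x :=
    ((𝔞.Hcast_heq _ _).trans
      ((𝔞.comp_congr rfl (φ.map_id _) HEq.rfl (𝔞.Hcast_heq _ _)).trans (𝔞.comp_id _)))
  id_comp x :=
    ((𝔞.Hcast_heq _ _).trans
      ((𝔞.comp_congr (φ.map_id _) rfl (𝔞.Hcast_heq _ _) HEq.rfl).trans (𝔞.id_comp _)))
  assoc x y z := by
    refine ((𝔞.Hcast_heq _ _).trans ?_).trans (𝔞.Hcast_heq _ _).symm
    refine ((𝔞.comp_congr (φ.map_comp _ _) rfl (𝔞.Hcast_heq _ _) HEq.rfl).trans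
      (𝔞.assoc _ _ _)).trans ?_
    exact 𝔞.comp_congr rfl (φ.map_comp _ _).symm HEq.rfl (𝔞.Hcast_heq _ _).symm

variable (k)

/-- A graded functor `(φ, F) : (𝒱, 𝔟) → (𝒰, 𝔞)` over a functor `φ : 𝒱 ⥤ 𝒰`: maps
`F_V : 𝔟_V → 𝔞_{φ V}` on objects and `k`-linear maps `𝔟_v(B, B') → 𝔞_{φ v}(F B, F B')`
on graded morphisms, preserving composition and identities. -/
structure GradedFunctor (φ : 𝒱 ⥤ 𝒰) (𝔟 : GradedCat k 𝒱) (𝔞 : GradedCat k 𝒰) :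
    Type u where
  obj : ∀ {V : 𝒱}, 𝔟.Obj V → 𝔞.Obj (φ.obj V)
  map : ∀ {V V' : 𝒱} (f : V ⟶ V') {B : 𝔟.Obj V} {B' : 𝔟.Obj V'},
    𝔟.Hom f B B' → 𝔞.Hom (φ.map f) (obj B) (obj B')
  map_add : ∀ {V V' : 𝒱} (f : V ⟶ V') {B : 𝔟.Obj V} {B' : 𝔟.Obj V'}
    (x y : 𝔟.Hom f B B'), map f (x + y) = map f x + map f y
  map_smul : ∀ {V V' : 𝒱} (f : V ⟶ V') {B : 𝔟.Obj V} {B' : 𝔟.Obj V'} (r : k)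
    (x : 𝔟.Hom f B B'), map f (r • x) = r • map f x
  map_id : ∀ {V : 𝒱} (B : 𝔟.Obj V), HEq (map (𝟙 V) (𝔟.id B)) (𝔞.id (obj B))
  map_comp : ∀ {V V' V'' : 𝒱} {f : V' ⟶ V''} {g : V ⟶ V'} {C : 𝔟.Obj V} {B : 𝔟.Obj V'}
    {A : 𝔟.Obj V''} (x : 𝔟.Hom f B A) (y : 𝔟.Hom g C B),
    HEq (map (g ≫ f) (𝔟.comp x y)) (𝔞.comp (map f x) (map g y))

variable {k}

namespace GradedFunctor

variable {φ : 𝒱 ⥤ 𝒰} {𝔟 : GradedCat k 𝒱} {𝔞 : GradedCat k 𝒰}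

theorem map_congr (F : GradedFunctor k φ 𝔟 𝔞) {V V' : 𝒱} {f g : V ⟶ V'} (hfg : f = g)
    {B : 𝔟.Obj V} {B' : 𝔟.Obj V'} {x : 𝔟.Hom f B B'} {y : 𝔟.Hom g B B'} (h : HEq x y) :
    HEq (F.map f x) (F.map g y) := by
  subst hfg; rw [eq_of_heq h]

/-- A graded functor is subcartesian (cartesian with respect to `Map → Mas`) iff all its
maps between graded `Hom`-modules are bijective. -/
def Subcartesian (F : GradedFunctor k φ 𝔟 𝔞) : Prop :=
  ∀ {V V' : 𝒱} (f : V ⟶ V') (B : 𝔟.Obj V) (B' : 𝔟.Obj V'),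
    Function.Bijective (fun x : 𝔟.Hom f B B' => F.map f x)

variable {𝒲 : Type u} [Category.{u} 𝒲] {ψ : 𝒲 ⥤ 𝒱} {𝔠 : GradedCat k 𝒲}

/-- Composition of graded functors. -/
def comp (F : GradedFunctor k φ 𝔟 𝔞) (G : GradedFunctor k ψ 𝔠 𝔟) :
    GradedFunctor k (ψ ⋙ φ) 𝔠 𝔞 where
  obj C := F.obj (G.obj C)
  map := fun {V V'} f {B B'} x => F.map (ψ.map f) (G.map f x)
  map_add := by intro V V' f B B' x y; (try dsimp only); rw [G.map_add, F.map_add]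
  map_smul := by intro V V' f B B' r x; (try dsimp only); rw [G.map_smul, F.map_smul]
  map_id B := (F.map_congr (ψ.map_id _) (G.map_id _)).trans (F.map_id _)
  map_comp x y := (F.map_congr (ψ.map_comp _ _) (G.map_comp _ _)).trans (F.map_comp _ _)

end GradedFunctor

/-- The canonical cartesian graded functor `δ^{φ,𝔞} : (𝒱, 𝔞^φ) → (𝒰, 𝔞)`. -/
def restrictProj (φ : 𝒱 ⥤ 𝒰) (𝔞 : GradedCat k 𝒰) :
    GradedFunctor k φ (𝔞.restrict φ) 𝔞 where
  obj A := A
  map := fun {V V'} _f {B B'} x => x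
  map_add := by intros; rfl
  map_smul := by intros; rfl
  map_id B := 𝔞.Hcast_heq (φ.map_id _).symm (𝔞.id B)
  map_comp x y := 𝔞.Hcast_heq (φ.map_comp _ _).symm (𝔞.comp x y)

theorem restrictProj_subcartesian (φ : 𝒱 ⥤ 𝒰) (𝔞 : GradedCat k 𝒰) :
    (restrictProj φ 𝔞).Subcartesian := by
  intro V V' f B B'
  constructor
  · intro a b h
    exact h
  · intro y
    exact ⟨y, rfl⟩

end MapGr

namespace MapGr

variable {k : Type u} [CommRing k]
variable {𝒰 : Type u} [Category.{u} 𝒰]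

/-- The category `𝒰^♯` associated to a `𝒰`-graded category `𝔞`: objects are pairs
`(U, A)` with `A ∈ 𝔞_U`, and morphisms `(U, A) → (U', A')` are the morphisms `U ⟶ U'`
of `𝒰`. -/
def Sh (𝔞 : GradedCat k 𝒰) : Type u := Σ X : 𝒰, 𝔞.Obj X

instance (𝔞 : GradedCat k 𝒰) : Category.{u} (Sh 𝔞) where
  Hom A B := A.1 ⟶ B.1
  id A := 𝟙 A.1
  comp f g := f ≫ g
  id_comp := by intros; simp
  comp_id := by intros; simp
  assoc := by intros; simp

/-- The underlying morphism of `𝒰` of a morphism of `𝒰^♯`. -/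
def Sh.base {𝔞 : GradedCat k 𝒰} {A B : Sh 𝔞} (f : A ⟶ B) : A.1 ⟶ B.1 := f

@[simp] theorem Sh.base_id {𝔞 : GradedCat k 𝒰} (A : Sh 𝔞) :
    Sh.base (𝟙 A) = 𝟙 A.1 := rfl

@[simp] theorem Sh.base_comp {𝔞 : GradedCat k 𝒰} {A B C : Sh 𝔞} (f : A ⟶ B) (g : B ⟶ C) :
    Sh.base (f ≫ g) = Sh.base f ≫ Sh.base g := rfl

/-- `n`-simplices of the simplicial nerve of a category with specified endpoints:
strings `X = X₀ → X₁ → ⋯ → Xₙ = Y` of `n` composable morphisms. -/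
inductive Pth (C : Type u) [Category.{u} C] : ℕ → C → C → Type u
  | nil (X : C) : Pth C 0 X X
  | cons {n : ℕ} {X Y Z : C} (f : X ⟶ Y) (p : Pth C n Y Z) : Pth C (n + 1) X Z

/-- The composite `|u| = uₙ₋₁ ⋯ u₁ u₀` of a string of composable morphisms. -/
def Pth.comp {C : Type u} [Category.{u} C] : ∀ {n : ℕ} {X Y : C}, Pth C n X Y → (X ⟶ Y)
  | _, _, _, .nil X => 𝟙 X
  | _, _, _, .cons f p => f ≫ p.comp

@[simp] theorem Pth.comp_nil {C : Type u} [Category.{u} C] (X : C) :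
    (Pth.nil X).comp = 𝟙 X := rfl

@[simp] theorem Pth.comp_cons {C : Type u} [Category.{u} C] {n : ℕ} {X Y Z : C}
    (f : X ⟶ Y) (p : Pth C n Y Z) : (Pth.cons f p).comp = f ≫ p.comp := rfl

/-- The map induced by a functor on simplices of the nerves. -/
def Pth.map {C D : Type u} [Category.{u} C] [Category.{u} D] (F : C ⥤ D) :
    ∀ {n : ℕ} {X Y : C}, Pth C n X Y → Pth D n (F.obj X) (F.obj Y)
  | _, _, _, .nil X => .nil _
  | _, _, _, .cons f p => .cons (F.map f) (p.map F)

theorem Pth.comp_map {C D : Type u} [Category.{u} C] [Category.{u} D] (F : C ⥤ D)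
    {n : ℕ} {X Y : C} (p : Pth C n X Y) : (p.map F).comp = F.map p.comp := by
  induction p with
  | nil => simp [Pth.map]
  | cons f p ih => simp [Pth.map, ih]

/-- The set of `n`-simplices of the nerve `𝒩(𝔞) = 𝒩(𝒰^♯)` of a graded category. -/
def NerveTot (C : Type u) [Category.{u} C] (m : ℕ) : Type u :=
  Σ (X : C) (Y : C), Pth C m X Y

/-- The map induced by a functor on the set of `n`-simplices of the nerves. -/
def NerveTot.map {C D : Type u} [Category.{u} C] [Category.{u} D] (F : C ⥤ D) {m : ℕ}
    (s : NerveTot C m) : NerveTot D m :=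
  ⟨F.obj s.1, F.obj s.2.1, Pth.map F s.2.2⟩

/-- A family of elements of the graded `Hom`-modules of `𝔞` lying over a simplex of the
nerve of `𝔞`. -/
inductive PthElts {k : Type u} [CommRing k] {𝒰 : Type u} [Category.{u} 𝒰]
    (𝔞 : GradedCat k 𝒰) : ∀ {n : ℕ} {X Y : Sh 𝔞}, Pth (Sh 𝔞) n X Y → Type u
  | nil (X : Sh 𝔞) : PthElts 𝔞 (Pth.nil X)
  | cons {n : ℕ} {X Y Z : Sh 𝔞} {f : X ⟶ Y} {p : Pth (Sh 𝔞) n Y Z}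
      (x : 𝔞.Hom (Sh.base f) X.2 Y.2) (e : PthElts 𝔞 p) : PthElts 𝔞 (Pth.cons f p)

variable (k)

/-- An `𝔞`-bimodule `M`: `k`-modules `M_u(B, A)` together with associative, unital,
`k`-bilinear left and right actions of `𝔞`. -/
structure Bimod {𝒰 : Type u} [Category.{u} 𝒰] (𝔞 : GradedCat k 𝒰) : Type (u + 1) where
  M : ∀ {X Y : 𝒰}, (X ⟶ Y) → 𝔞.Obj X → 𝔞.Obj Y → ModuleCat.{u} k
  actL : ∀ {X Y Z : 𝒰} {f : Y ⟶ Z} {g : X ⟶ Y} {B : 𝔞.Obj X} {A : 𝔞.Obj Y}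
    {A' : 𝔞.Obj Z}, 𝔞.Hom f A A' → M g B A → M (g ≫ f) B A'
  actR : ∀ {X Y Z : 𝒰} {f : Y ⟶ Z} {g : X ⟶ Y} {B' : 𝔞.Obj X} {B : 𝔞.Obj Y}
    {A : 𝔞.Obj Z}, M f B A → 𝔞.Hom g B' B → M (g ≫ f) B' A
  actL_add_left : ∀ {X Y Z : 𝒰} {f : Y ⟶ Z} {g : X ⟶ Y} {B : 𝔞.Obj X} {A : 𝔞.Obj Y}
    {A' : 𝔞.Obj Z} (x x' : 𝔞.Hom f A A') (m : M g B A),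
    actL (x + x') m = actL x m + actL x' m
  actL_add_right : ∀ {X Y Z : 𝒰} {f : Y ⟶ Z} {g : X ⟶ Y} {B : 𝔞.Obj X} {A : 𝔞.Obj Y}
    {A' : 𝔞.Obj Z} (x : 𝔞.Hom f A A') (m m' : M g B A),
    actL x (m + m') = actL x m + actL x m'
  actL_smul_left : ∀ {X Y Z : 𝒰} {f : Y ⟶ Z} {g : X ⟶ Y} {B : 𝔞.Obj X} {A : 𝔞.Obj Y}
    {A' : 𝔞.Obj Z} (r : k) (x : 𝔞.Hom f A A') (m : M g B A),
    actL (r • x) m = r • actL x m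
  actL_smul_right : ∀ {X Y Z : 𝒰} {f : Y ⟶ Z} {g : X ⟶ Y} {B : 𝔞.Obj X} {A : 𝔞.Obj Y}
    {A' : 𝔞.Obj Z} (r : k) (x : 𝔞.Hom f A A') (m : M g B A),
    actL x (r • m) = r • actL x m
  actR_add_left : ∀ {X Y Z : 𝒰} {f : Y ⟶ Z} {g : X ⟶ Y} {B' : 𝔞.Obj X} {B : 𝔞.Obj Y}
    {A : 𝔞.Obj Z} (m m' : M f B A) (y : 𝔞.Hom g B' B),
    actR (m + m') y = actR m y + actR m' y
  actR_add_right : ∀ {X Y Z : 𝒰} {f : Y ⟶ Z} {g : X ⟶ Y} {B' : 𝔞.Obj X} {B : 𝔞.Obj Y}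
    {A : 𝔞.Obj Z} (m : M f B A) (y y' : 𝔞.Hom g B' B),
    actR m (y + y') = actR m y + actR m y'
  actR_smul_left : ∀ {X Y Z : 𝒰} {f : Y ⟶ Z} {g : X ⟶ Y} {B' : 𝔞.Obj X} {B : 𝔞.Obj Y}
    {A : 𝔞.Obj Z} (r : k) (m : M f B A) (y : 𝔞.Hom g B' B),
    actR (r • m) y = r • actR m y
  actR_smul_right : ∀ {X Y Z : 𝒰} {f : Y ⟶ Z} {g : X ⟶ Y} {B' : 𝔞.Obj X} {B : 𝔞.Obj Y}
    {A : 𝔞.Obj Z} (r : k) (m : M f B A) (y : 𝔞.Hom g B' B),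
    actR m (r • y) = r • actR m y
  actL_id : ∀ {X Y : 𝒰} {g : X ⟶ Y} {B : 𝔞.Obj X} {A : 𝔞.Obj Y} (m : M g B A),
    HEq (actL (𝔞.id A) m) m
  actR_id : ∀ {X Y : 𝒰} {f : X ⟶ Y} {B : 𝔞.Obj X} {A : 𝔞.Obj Y} (m : M f B A),
    HEq (actR m (𝔞.id B)) m
  actL_actL : ∀ {W X Y Z : 𝒰} {f' : Y ⟶ Z} {f : X ⟶ Y} {g : W ⟶ X} {B : 𝔞.Obj W}
    {A : 𝔞.Obj X} {A' : 𝔞.Obj Y} {A'' : 𝔞.Obj Z} (x : 𝔞.Hom f' A' A'')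
    (y : 𝔞.Hom f A A') (m : M g B A),
    HEq (actL x (actL y m)) (actL (𝔞.comp x y) m)
  actR_actR : ∀ {W X Y Z : 𝒰} {f : Y ⟶ Z} {g : X ⟶ Y} {h : W ⟶ X} {B'' : 𝔞.Obj W}
    {B' : 𝔞.Obj X} {B : 𝔞.Obj Y} {A : 𝔞.Obj Z} (m : M f B A) (y : 𝔞.Hom g B' B)
    (y' : 𝔞.Hom h B'' B'),
    HEq (actR (actR m y) y') (actR m (𝔞.comp y y'))
  actL_actR : ∀ {W X Y Z : 𝒰} {f : Y ⟶ Z} {g : X ⟶ Y} {h : W ⟶ X} {B' : 𝔞.Obj W}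
    {B : 𝔞.Obj X} {A : 𝔞.Obj Y} {A' : 𝔞.Obj Z} (x : 𝔞.Hom f A A') (m : M g B A)
    (y : 𝔞.Hom h B' B),
    HEq (actL x (actR m y)) (actR (actL x m) y)

variable {k}

namespace Bimod

variable {𝔞 : GradedCat k 𝒰} (M : Bimod k 𝔞)

/-- Transport of bimodule elements along an equality of underlying morphisms of `𝒰`. -/
def cst {X Y : 𝒰} {f g : X ⟶ Y} (h : f = g) {B : 𝔞.Obj X} {A : 𝔞.Obj Y}
    (m : M.M f B A) : M.M g B A :=
  _root_.cast (by rw [h]) m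

theorem cst_heq {X Y : 𝒰} {f g : X ⟶ Y} (h : f = g) {B : 𝔞.Obj X} {A : 𝔞.Obj Y}
    (m : M.M f B A) : HEq (M.cst h m) m :=
  cast_heq _ _

theorem cst_add {X Y : 𝒰} {f g : X ⟶ Y} (h : f = g) {B : 𝔞.Obj X} {A : 𝔞.Obj Y}
    (m m' : M.M f B A) : M.cst h (m + m') = M.cst h m + M.cst h m' := by
  subst h; rfl

theorem cst_smul {X Y : 𝒰} {f g : X ⟶ Y} (h : f = g) {B : 𝔞.Obj X} {A : 𝔞.Obj Y}
    (r : k) (m : M.M f B A) : M.cst h (r • m) = r • M.cst h m := by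
  subst h; rfl

theorem actL_congr {X Y Z : 𝒰} {f f' : Y ⟶ Z} (hf : f = f') {g g' : X ⟶ Y}
    (hg : g = g') {B : 𝔞.Obj X} {A : 𝔞.Obj Y} {A' : 𝔞.Obj Z} {x : 𝔞.Hom f A A'}
    {x' : 𝔞.Hom f' A A'} (hx : HEq x x') {m : M.M g B A} {m' : M.M g' B A}
    (hm : HEq m m') : HEq (M.actL x m) (M.actL x' m') := by
  subst hf; subst hg; rw [eq_of_heq hx, eq_of_heq hm]

theorem actR_congr {X Y Z : 𝒰} {f f' : Y ⟶ Z} (hf : f = f') {g g' : X ⟶ Y}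
    (hg : g = g') {B' : 𝔞.Obj X} {B : 𝔞.Obj Y} {A : 𝔞.Obj Z} {m : M.M f B A}
    {m' : M.M f' B A} (hm : HEq m m') {y : 𝔞.Hom g B' B} {y' : 𝔞.Hom g' B' B}
    (hy : HEq y y') : HEq (M.actR m y) (M.actR m' y') := by
  subst hf; subst hg; rw [eq_of_heq hm, eq_of_heq hy]

end Bimod

/-- The identity bimodule `1_𝔞`. -/
def GradedCat.unit (𝔞 : GradedCat k 𝒰) : Bimod k 𝔞 where
  M := 𝔞.Hom
  actL := 𝔞.comp
  actR := 𝔞.comp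
  actL_add_left := 𝔞.comp_add_left
  actL_add_right := 𝔞.comp_add_right
  actL_smul_left := 𝔞.comp_smul_left
  actL_smul_right := 𝔞.comp_smul_right
  actR_add_left := 𝔞.comp_add_left
  actR_add_right := 𝔞.comp_add_right
  actR_smul_left := 𝔞.comp_smul_left
  actR_smul_right := 𝔞.comp_smul_right
  actL_id := 𝔞.id_comp
  actR_id := 𝔞.comp_id
  actL_actL x y m := (𝔞.assoc x y m).symm
  actR_actR m y y' := 𝔞.assoc m y y'
  actL_actR x m y := (𝔞.assoc x m y).symm

variable {𝒱 : Type u} [Category.{u} 𝒱]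

/-- The pullback `F*M` of an `𝔞`-bimodule along a graded functor
`(φ, F) : (𝒱, 𝔟) → (𝒰, 𝔞)`: `(F*M)_v(B, B') = M_{φ v}(F B, F B')`. -/
def Bimod.pullback {φ : 𝒱 ⥤ 𝒰} {𝔟 : GradedCat k 𝒱} {𝔞 : GradedCat k 𝒰}
    (F : GradedFunctor k φ 𝔟 𝔞) (M : Bimod k 𝔞) : Bimod k 𝔟 where
  M f B B' := M.M (φ.map f) (F.obj B) (F.obj B')
  actL := fun {X Y Z f g B A A'} x m =>
    M.cst (φ.map_comp g f).symm (M.actL (F.map f x) m)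
  actR := fun {X Y Z f g B' B A} m y =>
    M.cst (φ.map_comp g f).symm (M.actR m (F.map g y))
  actL_add_left := by
    intros; (try dsimp only); rw [F.map_add, M.actL_add_left, M.cst_add]
  actL_add_right := by
    intros; (try dsimp only); rw [M.actL_add_right, M.cst_add]
  actL_smul_left := by
    intros; (try dsimp only); rw [F.map_smul, M.actL_smul_left, M.cst_smul]
  actL_smul_right := by
    intros; (try dsimp only); rw [M.actL_smul_right, M.cst_smul]
  actR_add_left := by
    intros; (try dsimp only); rw [M.actR_add_left, M.cst_add]
  actR_add_right := by
    intros; (try dsimp only); rw [F.map_add, M.actR_add_right, M.cst_add]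
  actR_smul_left := by
    intros; (try dsimp only); rw [M.actR_smul_left, M.cst_smul]
  actR_smul_right := by
    intros; (try dsimp only); rw [F.map_smul, M.actR_smul_right, M.cst_smul]
  actL_id := by
    intro X Y g B A m; (try dsimp only)
    exact (M.cst_heq _ _).trans
      ((M.actL_congr (φ.map_id _) rfl (F.map_id _) HEq.rfl).trans (M.actL_id m))
  actR_id := by
    intro X Y f B A m; (try dsimp only)
    exact (M.cst_heq _ _).trans
      ((M.actR_congr rfl (φ.map_id _) HEq.rfl (F.map_id _)).trans (M.actR_id m))
  actL_actL := by
    intro W X Y Z f' f g B A A' A'' x y m; (try dsimp only)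
    refine ((M.cst_heq _ _).trans ?_).trans (M.cst_heq _ _).symm
    refine ((M.actL_congr rfl (φ.map_comp _ _) HEq.rfl (M.cst_heq _ _)).trans
      (M.actL_actL _ _ _)).trans ?_
    exact M.actL_congr (φ.map_comp _ _).symm rfl (F.map_comp _ _).symm HEq.rfl
  actR_actR := by
    intro W X Y Z f g h B'' B' B A m y y'; (try dsimp only)
    refine ((M.cst_heq _ _).trans ?_).trans (M.cst_heq _ _).symm
    refine ((M.actR_congr (φ.map_comp _ _) rfl (M.cst_heq _ _) HEq.rfl).trans
      (M.actR_actR _ _ _)).trans ?_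
    exact M.actR_congr rfl (φ.map_comp _ _).symm HEq.rfl (F.map_comp _ _).symm
  actL_actR := by
    intro W X Y Z f g h B' B A A' x m y; (try dsimp only)
    refine ((M.cst_heq _ _).trans ?_).trans (M.cst_heq _ _).symm
    refine ((M.actL_congr rfl (φ.map_comp _ _) HEq.rfl (M.cst_heq _ _)).trans
      (M.actL_actR _ _ _)).trans ?_
    exact M.actR_congr (φ.map_comp _ _).symm rfl (M.cst_heq _ _).symm HEq.rfl

/-- The functor `𝒱^♯ ⥤ 𝒰^♯` induced by a graded functor. -/
def sharpF {φ : 𝒱 ⥤ 𝒰} {𝔟 : GradedCat k 𝒱} {𝔞 : GradedCat k 𝒰}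
    (F : GradedFunctor k φ 𝔟 𝔞) : Sh 𝔟 ⥤ Sh 𝔞 where
  obj X := ⟨φ.obj X.1, F.obj X.2⟩
  map {X Y} f := φ.map (Sh.base f)
  map_id X := φ.map_id X.1
  map_comp f g := φ.map_comp _ _

/-- The map induced by a graded functor on families of elements over simplices. -/
def eltsMap {φ : 𝒱 ⥤ 𝒰} {𝔟 : GradedCat k 𝒱} {𝔞 : GradedCat k 𝒰}
    (F : GradedFunctor k φ 𝔟 𝔞) :
    ∀ {n : ℕ} {X Y : Sh 𝔟} {p : Pth (Sh 𝔟) n X Y},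
      PthElts 𝔟 p → PthElts 𝔞 (p.map (sharpF F))
  | _, _, _, _, .nil X => .nil _
  | _, _, _, _, .cons x e => .cons (F.map _ x) (eltsMap F e)

/-- The module of raw Hochschild `n`-cochains of `(𝒰, 𝔞)` with values in an
`𝔞`-bimodule `M`: families, indexed by the `n`-simplices `(u, A)` of `𝒩(𝔞)`, of maps
`𝔞_{u_{n-1}} ⊗ ⋯ ⊗ 𝔞_{u_0} → M_{|u|}(A₀, Aₙ)` (multilinearity is the separate
predicate `IsCochain`). -/
abbrev RawCochain {𝔞 : GradedCat k 𝒰} (M : Bimod k 𝔞) (n : ℕ) : Type u :=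
  ∀ (X Y : Sh 𝔞) (p : Pth (Sh 𝔞) n X Y), PthElts 𝔞 p → M.M (Sh.base p.comp) X.2 Y.2

/-- Restriction of Hochschild cochains along a graded functor, with values in the
pullback bimodule: `(F*ψ)_{(v,B)} = ψ_{(φ v, F B)} ∘ F^{⊗n}`. -/
def Fstar {φ : 𝒱 ⥤ 𝒰} {𝔟 : GradedCat k 𝒱} {𝔞 : GradedCat k 𝒰}
    (F : GradedFunctor k φ 𝔟 𝔞) (M : Bimod k 𝔞) {n : ℕ} (c : RawCochain M n) :
    RawCochain (Bimod.pullback F M) n :=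
  fun X Y p e =>
    M.cst (by rw [Pth.comp_map]; rfl) (c _ _ (p.map (sharpF F)) (eltsMap F e))

/-- Restriction of Hochschild cochains (with values in the identity bimodules) along a
subcartesian graded functor: `(F*ψ)_{(v,B)} = F⁻¹ ∘ ψ_{(φ v, F B)} ∘ F^{⊗n}`. -/
noncomputable def FstarUnit {φ : 𝒱 ⥤ 𝒰} {𝔟 : GradedCat k 𝒱} {𝔞 : GradedCat k 𝒰}
    (F : GradedFunctor k φ 𝔟 𝔞) (hF : F.Subcartesian) {n : ℕ}
    (c : RawCochain 𝔞.unit n) : RawCochain 𝔟.unit n :=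
  fun X Y p e =>
    (Equiv.ofBijective _ (hF (Sh.base p.comp) X.2 Y.2)).symm
      ((𝔞.unit).cst (by rw [Pth.comp_map]; rfl) (c _ _ (p.map (sharpF F)) (eltsMap F e)))

section Multilinear

variable {𝔞 : GradedCat k 𝒰} (M : Bimod k 𝔞)

/-- The multilinearity predicate for (relative) Hochschild cochains: additivity and
`k`-homogeneity in the first slot, and, recursively, multilinearity of all partial
evaluations. -/
def IsML : ∀ {n : ℕ} {W : 𝒰} {B : 𝔞.Obj W} {Y : Sh 𝔞} {v : W ⟶ Y.1},
    (∀ (Z : Sh 𝔞) (q : Pth (Sh 𝔞) n Y Z), PthElts 𝔞 q →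
      M.M (v ≫ Sh.base q.comp) B Z.2) → Prop
  | 0, _, _, _, _, _ => True
  | n + 1, W, B, Y, v, c =>
      (∀ (Y' Z : Sh 𝔞) (a : Y ⟶ Y') (q : Pth (Sh 𝔞) n Y' Z) (e : PthElts 𝔞 q)
        (x x' : 𝔞.Hom (Sh.base a) Y.2 Y'.2),
        c Z (.cons a q) (.cons (x + x') e) =
          c Z (.cons a q) (.cons x e) + c Z (.cons a q) (.cons x' e)) ∧
      (∀ (Y' Z : Sh 𝔞) (a : Y ⟶ Y') (q : Pth (Sh 𝔞) n Y' Z) (e : PthElts 𝔞 q) (r : k)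
        (x : 𝔞.Hom (Sh.base a) Y.2 Y'.2),
        c Z (.cons a q) (.cons (r • x) e) = r • c Z (.cons a q) (.cons x e)) ∧
      (∀ (Y' : Sh 𝔞) (a : Y ⟶ Y') (x : 𝔞.Hom (Sh.base a) Y.2 Y'.2),
        IsML (v := v ≫ Sh.base a)
          (fun Z q e => M.cst (by simp) (c Z (.cons a q) (.cons x e))))

/-- A raw cochain, viewed as a relative cochain. -/
def toRel {n : ℕ} (c : RawCochain M n) (X : Sh 𝔞) :
    ∀ (Z : Sh 𝔞) (q : Pth (Sh 𝔞) n X Z), PthElts 𝔞 q →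
      M.M (𝟙 X.1 ≫ Sh.base q.comp) X.2 Z.2 :=
  fun Z q e => M.cst (by simp) (c X Z q e)

/-- A raw cochain is a genuine Hochschild cochain if it is multilinear. -/
def IsCochain {n : ℕ} (c : RawCochain M n) : Prop :=
  ∀ X : Sh 𝔞, IsML M (toRel M c X)

end Multilinear

section Differential

variable {𝔞 : GradedCat k 𝒰}

/-- The inductive core of the Hochschild differential: `χ` is the relative cochain with
the already-consumed prefix applied, and `G` records the evaluation with the last
morphism of the prefix composed into the first remaining slot (initially, the right
action on the source). -/
def hochD (M : Bimod k 𝔞) {W : 𝒰} (B : 𝔞.Obj W) :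
    ∀ {m : ℕ} {Y Z : Sh 𝔞} (v : W ⟶ Y.1)
      (χ : ∀ (Z' : Sh 𝔞) (q : Pth (Sh 𝔞) m Y Z'), PthElts 𝔞 q →
        M.M (v ≫ Sh.base q.comp) B Z'.2)
      (G : ∀ (Y' Z' : Sh 𝔞) (c : Y ⟶ Y') (z : 𝔞.Hom (Sh.base c) Y.2 Y'.2)
        (q : Pth (Sh 𝔞) m Y' Z'), PthElts 𝔞 q →
        M.M (v ≫ (Sh.base c ≫ Sh.base q.comp)) B Z'.2)
      (p : Pth (Sh 𝔞) (m + 1) Y Z) (e : PthElts 𝔞 p),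
      M.M (v ≫ Sh.base p.comp) B Z.2
  | 0, Y, Z, v, χ, G, .cons a (.nil _), .cons x e' =>
      G _ _ a x (.nil _) e' - M.cst (by simp) (M.actL x (χ _ (.nil _) (.nil _)))
  | m + 1, Y, Z, v, χ, G, .cons a q, .cons x e' =>
      G _ _ a x q e' -
        M.cst (by simp)
          (hochD M B (v ≫ Sh.base a)
            (fun Z' r er => M.cst (by simp) (χ Z' (.cons a r) (.cons x er)))
            (fun Y'' Z' c z r er =>
              M.cst (by simp) (χ Z' (.cons (a ≫ c) r) (.cons (𝔞.comp z x) er)))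
            q e')

/-- The simplicial Hochschild differential on raw cochains. -/
def dRaw (M : Bimod k 𝔞) {n : ℕ} (c : RawCochain M n) : RawCochain M (n + 1) :=
  fun X Z p e =>
    M.cst (by simp)
      (hochD M X.2 (𝟙 X.1)
        (fun Z' q eq => M.cst (by simp) (c X Z' q eq))
        (fun Y' Z' a z q eq => M.cst (by simp) (M.actR (c Y' Z' q eq) z))
        p e)

end Differential

end MapGr

namespace MapGr

variable {k : Type u} [CommRing k]
variable {𝒰 : Type u} [Category.{u} 𝒰]

/-- A subcategory of `𝒰`: a class of objects and a class of morphisms, closed under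
identities and composition. -/
structure Subcat (𝒰 : Type u) [Category.{u} 𝒰] where
  objs : 𝒰 → Prop
  homs : ∀ {X Y : 𝒰}, (X ⟶ Y) → Prop
  dom_mem : ∀ {X Y : 𝒰} (f : X ⟶ Y), homs f → objs X
  cod_mem : ∀ {X Y : 𝒰} (f : X ⟶ Y), homs f → objs Y
  id_mem : ∀ X : 𝒰, objs X → homs (𝟙 X)
  comp_mem : ∀ {X Y Z : 𝒰} (f : X ⟶ Y) (g : Y ⟶ Z), homs f → homs g → homs (f ≫ g)

/-- The category carried by a subcategory. -/
def Subcat.Cat (𝒮 : Subcat 𝒰) : Type u := { X : 𝒰 // 𝒮.objs X }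

instance (𝒮 : Subcat 𝒰) : Category.{u} 𝒮.Cat where
  Hom A B := { f : A.1 ⟶ B.1 // 𝒮.homs f }
  id A := ⟨𝟙 A.1, 𝒮.id_mem A.1 A.2⟩
  comp f g := ⟨f.1 ≫ g.1, 𝒮.comp_mem _ _ f.2 g.2⟩
  id_comp f := by apply Subtype.ext; simp
  comp_id f := by apply Subtype.ext; simp
  assoc f g h := by apply Subtype.ext; simp

/-- The inclusion functor of a subcategory. -/
def Subcat.incl (𝒮 : Subcat 𝒰) : 𝒮.Cat ⥤ 𝒰 where
  obj A := A.1
  map f := f.1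
  map_id _ := rfl
  map_comp _ _ := rfl

/-- The intersection `𝒱₁ ∩ 𝒱₂` of two subcategories. -/
def Subcat.inter (𝒮 𝒯 : Subcat 𝒰) : Subcat 𝒰 where
  objs X := 𝒮.objs X ∧ 𝒯.objs X
  homs f := 𝒮.homs f ∧ 𝒯.homs f
  dom_mem f h := ⟨𝒮.dom_mem f h.1, 𝒯.dom_mem f h.2⟩
  cod_mem f h := ⟨𝒮.cod_mem f h.1, 𝒯.cod_mem f h.2⟩
  id_mem X h := ⟨𝒮.id_mem X h.1, 𝒯.id_mem X h.2⟩
  comp_mem f g h h' := ⟨𝒮.comp_mem f g h.1 h'.1, 𝒯.comp_mem f g h.2 h'.2⟩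

/-- The inclusion `𝒱₁ ∩ 𝒱₂ ⊆ 𝒱₁`. -/
def Subcat.interFst (𝒮 𝒯 : Subcat 𝒰) : (𝒮.inter 𝒯).Cat ⥤ 𝒮.Cat where
  obj A := ⟨A.1, A.2.1⟩
  map f := ⟨f.1, f.2.1⟩
  map_id _ := rfl
  map_comp _ _ := rfl

/-- The inclusion `𝒱₁ ∩ 𝒱₂ ⊆ 𝒱₂`. -/
def Subcat.interSnd (𝒮 𝒯 : Subcat 𝒰) : (𝒮.inter 𝒯).Cat ⥤ 𝒯.Cat where
  obj A := ⟨A.1, A.2.2⟩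
  map f := ⟨f.1, f.2.2⟩
  map_id _ := rfl
  map_comp _ _ := rfl

/-- The canonical (cartesian) graded functor
`(𝒱₁ ∩ 𝒱₂, 𝔞^φ) → (𝒱₁, 𝔞^{φ₁})` over the inclusion `𝒱₁ ∩ 𝒱₂ ⊆ 𝒱₁`. -/
def interRes₁ (𝒮 𝒯 : Subcat 𝒰) (𝔞 : GradedCat k 𝒰) :
    GradedFunctor k (Subcat.interFst 𝒮 𝒯) (𝔞.restrict (𝒮.inter 𝒯).incl)
      (𝔞.restrict 𝒮.incl) where
  obj {V} B := B
  map := fun {V V'} _f {B B'} x => x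
  map_add := by intros; rfl
  map_smul := by intros; rfl
  map_id := by
    intro V B
    exact (𝔞.Hcast_heq ((𝒮.inter 𝒯).incl.map_id V).symm (𝔞.id B)).trans
      (𝔞.Hcast_heq (𝒮.incl.map_id ((Subcat.interFst 𝒮 𝒯).obj V)).symm (𝔞.id B)).symm
  map_comp := by
    intro V V' V'' f g C B A x y
    exact (𝔞.Hcast_heq ((𝒮.inter 𝒯).incl.map_comp g f).symm (𝔞.comp x y)).trans
      (𝔞.Hcast_heq (𝒮.incl.map_comp ((Subcat.interFst 𝒮 𝒯).map g)
        ((Subcat.interFst 𝒮 𝒯).map f)).symm (𝔞.comp x y)).symm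

/-- The canonical (cartesian) graded functor
`(𝒱₁ ∩ 𝒱₂, 𝔞^φ) → (𝒱₂, 𝔞^{φ₂})` over the inclusion `𝒱₁ ∩ 𝒱₂ ⊆ 𝒱₂`. -/
def interRes₂ (𝒮 𝒯 : Subcat 𝒰) (𝔞 : GradedCat k 𝒰) :
    GradedFunctor k (Subcat.interSnd 𝒮 𝒯) (𝔞.restrict (𝒮.inter 𝒯).incl)
      (𝔞.restrict 𝒯.incl) where
  obj {V} B := B
  map := fun {V V'} _f {B B'} x => x
  map_add := by intros; rfl
  map_smul := by intros; rfl
  map_id := by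
    intro V B
    exact (𝔞.Hcast_heq ((𝒮.inter 𝒯).incl.map_id V).symm (𝔞.id B)).trans
      (𝔞.Hcast_heq (𝒯.incl.map_id ((Subcat.interSnd 𝒮 𝒯).obj V)).symm (𝔞.id B)).symm
  map_comp := by
    intro V V' V'' f g C B A x y
    exact (𝔞.Hcast_heq ((𝒮.inter 𝒯).incl.map_comp g f).symm (𝔞.comp x y)).trans
      (𝔞.Hcast_heq (𝒯.incl.map_comp ((Subcat.interSnd 𝒮 𝒯).map g)
        ((Subcat.interSnd 𝒮 𝒯).map f)).symm (𝔞.comp x y)).symm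

theorem interRes₁_subcartesian (𝒮 𝒯 : Subcat 𝒰) (𝔞 : GradedCat k 𝒰) :
    (interRes₁ 𝒮 𝒯 𝔞).Subcartesian := by
  intro V V' f B B'
  exact ⟨fun a b h => h, fun y => ⟨y, rfl⟩⟩

theorem interRes₂_subcartesian (𝒮 𝒯 : Subcat 𝒰) (𝔞 : GradedCat k 𝒰) :
    (interRes₂ 𝒮 𝒯 𝔞).Subcartesian := by
  intro V V' f B B'
  exact ⟨fun a b h => h, fun y => ⟨y, rfl⟩⟩

end MapGr

/-!
Restricting a cochain to a subcategory only reads its values on the simplices lying in that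
subcategory, and multilinearity is a condition on one simplex at a time, so it survives
restriction, extension by zero and gluing along a pathwise case split. Injectivity then holds
because every simplex lies in `𝒱₁` or in `𝒱₂`. For exactness in the middle, glue `c₁` on the
simplices of `𝒱₁` with the extension by zero of `c₂` elsewhere: on simplices of `𝒱₁ ∩ 𝒱₂` the
two extensions by zero agree, since both are recovered from the common restriction
`α₁* c₁ = α₂* c₂`. For surjectivity take `c₁ = 0` and for `c₂` the restriction to `𝒱₂` of the
extension by zero of `c₀`.
-/

namespace MapGr

variable {k : Type u} [CommRing k] {𝒰 𝒱 𝒲 : Type u} [Category.{u} 𝒰] [Category.{u} 𝒱]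
  [Category.{u} 𝒲]

local notation "res[" φ "]" => FstarUnit (restrictProj φ _) (restrictProj_subcartesian φ _)

theorem Pth.map_map {C D E : Type u} [Category.{u} C] [Category.{u} D] [Category.{u} E]
    (F : C ⥤ D) (G : D ⥤ E) : ∀ {n : ℕ} {X Y : C} (p : Pth C n X Y),
      (p.map F).map G = p.map (F ⋙ G)
  | _, _, _, .nil _ => rfl
  | _, _, _, .cons _ p => congrArg (Pth.cons _) (Pth.map_map F G p)

theorem PthElts.cons_heq {𝔞 : GradedCat k 𝒰} {n : ℕ} {X Y Y' Z : Sh 𝔞}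
    {f : X ⟶ Y} {p : Pth (Sh 𝔞) n Y Z} {f' : X ⟶ Y'} {p' : Pth (Sh 𝔞) n Y' Z}
    (hY : Y = Y') (hf : HEq f f') (hp : HEq p p')
    {x : 𝔞.Hom (Sh.base f) X.2 Y.2} {x' : 𝔞.Hom (Sh.base f') X.2 Y'.2} (hx : HEq x x')
    {e : PthElts 𝔞 p} {e' : PthElts 𝔞 p'} (he : HEq e e') :
    HEq (PthElts.cons x e) (PthElts.cons x' e') := by
  subst hY; subst hf; subst hp; subst hx; subst he; rfl

theorem RawCochain.congr_heq {𝔞 : GradedCat k 𝒰} {M : Bimod k 𝔞} {n : ℕ}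
    (c : RawCochain M n) {X Y : Sh 𝔞} {p p' : Pth (Sh 𝔞) n X Y} (hp : p = p')
    {e : PthElts 𝔞 p} {e' : PthElts 𝔞 p'} (he : HEq e e') :
    HEq (c X Y p e) (c X Y p' e') := by
  subst hp; subst he; rfl

def Sh.proj (𝔞 : GradedCat k 𝒰) : Sh 𝔞 ⥤ 𝒰 where
  obj X := X.1
  map f := Sh.base f

namespace Subcat

variable (𝒮 : Subcat 𝒰)

def ContainsPth : ∀ {n : ℕ} {X Y : 𝒰}, Pth 𝒰 n X Y → Prop
  | _, _, _, .nil X => 𝒮.objs X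
  | _, _, _, .cons f p => 𝒮.homs f ∧ ContainsPth p

variable {𝒮}

theorem ContainsPth.src_mem : ∀ {n : ℕ} {X Y : 𝒰} {p : Pth 𝒰 n X Y},
    𝒮.ContainsPth p → 𝒮.objs X
  | _, _, _, .nil _, h => h
  | _, _, _, .cons f _, h => 𝒮.dom_mem f h.1

theorem ContainsPth.tgt_mem : ∀ {n : ℕ} {X Y : 𝒰} {p : Pth 𝒰 n X Y},
    𝒮.ContainsPth p → 𝒮.objs Y
  | _, _, _, .nil _, h => h
  | _, _, _, .cons _ _, h => ContainsPth.tgt_mem h.2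

theorem containsPth_inter_iff (𝒮 𝒯 : Subcat 𝒰) : ∀ {n : ℕ} {X Y : 𝒰} (p : Pth 𝒰 n X Y),
    (𝒮.inter 𝒯).ContainsPth p ↔ 𝒮.ContainsPth p ∧ 𝒯.ContainsPth p
  | _, _, _, .nil _ => Iff.rfl
  | _, _, _, .cons f p => by
    rw [ContainsPth, ContainsPth, ContainsPth, containsPth_inter_iff 𝒮 𝒯 p]
    exact and_and_and_comm

theorem containsPth_map_incl : ∀ {n : ℕ} {A B : 𝒮.Cat} (p : Pth 𝒮.Cat n A B),
    𝒮.ContainsPth (p.map 𝒮.incl)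
  | _, _, _, .nil A => A.2
  | _, _, _, .cons f p => ⟨f.2, containsPth_map_incl p⟩

theorem containsPth_of_map_incl_eq {m : ℕ} {X Y : 𝒰} {p : Pth 𝒰 m X Y}
    {t : NerveTot 𝒮.Cat m} (ht : NerveTot.map 𝒮.incl t = ⟨X, Y, p⟩) :
    𝒮.ContainsPth p := by
  obtain ⟨A, B, q⟩ := t
  obtain ⟨rfl, ht⟩ := Sigma.mk.inj_iff.mp ht
  obtain ⟨rfl, ht⟩ := Sigma.mk.inj_iff.mp (eq_of_heq ht)
  exact eq_of_heq ht ▸ containsPth_map_incl q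

theorem containsPth_sharp_restrictProj (𝔞 : GradedCat k 𝒰) :
    ∀ {n : ℕ} {X Y : Sh (𝔞.restrict 𝒮.incl)} (p : Pth (Sh (𝔞.restrict 𝒮.incl)) n X Y),
      𝒮.ContainsPth ((p.map (sharpF (restrictProj 𝒮.incl 𝔞))).map (Sh.proj 𝔞))
  | _, _, _, .nil X => X.1.2
  | _, _, _, .cons f p => ⟨(Sh.base f).2, containsPth_sharp_restrictProj 𝔞 p⟩

variable (𝒮) {𝔞 : GradedCat k 𝒰}

def liftObj (X : Sh 𝔞) (hX : 𝒮.objs X.1) : Sh (𝔞.restrict 𝒮.incl) := ⟨⟨X.1, hX⟩, X.2⟩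

variable {𝒮}

def liftPth : ∀ {n : ℕ} {X Y : Sh 𝔞} (q : Pth (Sh 𝔞) n X Y)
    (h : 𝒮.ContainsPth (q.map (Sh.proj 𝔞))),
    Pth (Sh (𝔞.restrict 𝒮.incl)) n (𝒮.liftObj X h.src_mem) (𝒮.liftObj Y h.tgt_mem)
  | _, _, _, .nil _, _ => .nil _
  | _, _, _, .cons f q, h =>
    .cons (show 𝒮.liftObj _ _ ⟶ 𝒮.liftObj _ h.2.src_mem from ⟨Sh.base f, h.1⟩)
      (liftPth q h.2)

def liftElts : ∀ {n : ℕ} {X Y : Sh 𝔞} {q : Pth (Sh 𝔞) n X Y}, PthElts 𝔞 q →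
    ∀ (h : 𝒮.ContainsPth (q.map (Sh.proj 𝔞))), PthElts (𝔞.restrict 𝒮.incl) (liftPth q h)
  | _, _, _, _, .nil _, _ => .nil _
  | _, _, _, _, .cons x e, h => .cons x (liftElts e h.2)

theorem map_liftPth : ∀ {n : ℕ} {X Y : Sh 𝔞} (q : Pth (Sh 𝔞) n X Y)
    (h : 𝒮.ContainsPth (q.map (Sh.proj 𝔞))),
    (liftPth q h).map (sharpF (restrictProj 𝒮.incl 𝔞)) = q
  | _, _, _, .nil _, _ => rfl
  | _, _, _, .cons f q, h => congrArg (Pth.cons f) (map_liftPth q h.2)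

theorem eltsMap_liftElts_heq : ∀ {n : ℕ} {X Y : Sh 𝔞} {q : Pth (Sh 𝔞) n X Y}
    (e : PthElts 𝔞 q) (h : 𝒮.ContainsPth (q.map (Sh.proj 𝔞))),
    HEq (eltsMap (restrictProj 𝒮.incl 𝔞) (liftElts e h)) e
  | _, _, _, _, .nil _, _ => HEq.rfl
  | _, _, _, _, .cons _ e, h =>
    PthElts.cons_heq rfl HEq.rfl (heq_of_eq (map_liftPth _ h.2)) HEq.rfl
      (eltsMap_liftElts_heq e h.2)

theorem liftPth_map : ∀ {n : ℕ} {X Y : Sh (𝔞.restrict 𝒮.incl)}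
    (p : Pth (Sh (𝔞.restrict 𝒮.incl)) n X Y)
    (h : 𝒮.ContainsPth ((p.map (sharpF (restrictProj 𝒮.incl 𝔞))).map (Sh.proj 𝔞))),
    liftPth (p.map (sharpF (restrictProj 𝒮.incl 𝔞))) h = p
  | _, _, _, .nil _, _ => rfl
  | _, _, _, .cons f p, h => congrArg (Pth.cons f) (liftPth_map p h.2)

theorem liftElts_eltsMap_heq : ∀ {n : ℕ} {X Y : Sh (𝔞.restrict 𝒮.incl)}
    {p : Pth (Sh (𝔞.restrict 𝒮.incl)) n X Y} (e : PthElts (𝔞.restrict 𝒮.incl) p)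
    (h : 𝒮.ContainsPth ((p.map (sharpF (restrictProj 𝒮.incl 𝔞))).map (Sh.proj 𝔞))),
    HEq (liftElts (eltsMap (restrictProj 𝒮.incl 𝔞) e) h) e
  | _, _, _, _, .nil _, _ => HEq.rfl
  | _, _, _, _, .cons _ e, h =>
    PthElts.cons_heq rfl HEq.rfl (heq_of_eq (liftPth_map _ h.2)) HEq.rfl
      (liftElts_eltsMap_heq e h.2)

theorem incl_map_base_comp_liftPth {n : ℕ} {X Y : Sh 𝔞} (q : Pth (Sh 𝔞) n X Y)
    (h : 𝒮.ContainsPth (q.map (Sh.proj 𝔞))) :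
    𝒮.incl.map (Sh.base (liftPth q h).comp) = Sh.base q.comp := by
  have h_comp := congrArg (fun p => Sh.base p.comp) (map_liftPth q h)
  rw [Pth.comp_map] at h_comp
  exact h_comp

end Subcat

theorem Bimod.cst_zero {𝔞 : GradedCat k 𝒰} (M : Bimod k 𝔞) {X Y : 𝒰} {f g : X ⟶ Y}
    (h : f = g) {B : 𝔞.Obj X} {A : 𝔞.Obj Y} : M.cst h (0 : M.M f B A) = 0 := by
  subst h; rfl

theorem GradedCat.zero_heq {𝔞 : GradedCat k 𝒰} {X Y : 𝒰} {f g : X ⟶ Y} (h : f = g)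
    {B : 𝔞.Obj X} {A : 𝔞.Obj Y} : HEq (0 : 𝔞.Hom f B A) (0 : 𝔞.Hom g B A) := by
  subst h; rfl

theorem base_comp_map_sharpF {φ : 𝒱 ⥤ 𝒰} {𝔞 : GradedCat k 𝒰} {𝔟 : GradedCat k 𝒱}
    (F : GradedFunctor k φ 𝔟 𝔞) {n : ℕ} {X Y : Sh 𝔟} (p : Pth (Sh 𝔟) n X Y) :
    Sh.base (p.map (sharpF F)).comp = φ.map (Sh.base p.comp) := by
  rw [Pth.comp_map]; rfl

namespace GradedFunctor

variable {φ : 𝒱 ⥤ 𝒰} {ψ : 𝒲 ⥤ 𝒱} {𝔞 : GradedCat k 𝒰} {𝔟 : GradedCat k 𝒱}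
  {𝔠 : GradedCat k 𝒲} (F : GradedFunctor k φ 𝔟 𝔞) (G : GradedFunctor k ψ 𝔠 𝔟)

theorem map_zero {V V' : 𝒱} (f : V ⟶ V') {B : 𝔟.Obj V} {B' : 𝔟.Obj V'} :
    F.map f (0 : 𝔟.Hom f B B') = 0 := by
  simpa using F.map_add f (0 : 𝔟.Hom f B B') 0

theorem Subcartesian.comp {F : GradedFunctor k φ 𝔟 𝔞} {G : GradedFunctor k ψ 𝔠 𝔟}
    (hF : F.Subcartesian) (hG : G.Subcartesian) : (F.comp G).Subcartesian :=
  fun f B B' => (hF (ψ.map f) (G.obj B) (G.obj B')).comp (hG f B B')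

theorem eltsMap_comp_heq : ∀ {n : ℕ} {X Y : Sh 𝔠} {p : Pth (Sh 𝔠) n X Y} (e : PthElts 𝔠 p),
    HEq (eltsMap F (eltsMap G e)) (eltsMap (F.comp G) e)
  | _, _, _, _, .nil _ => HEq.rfl
  | _, _, _, _, .cons _ e =>
    PthElts.cons_heq rfl HEq.rfl (heq_of_eq (Pth.map_map _ _ _)) HEq.rfl
      (eltsMap_comp_heq e)

end GradedFunctor

section Restriction

variable {φ : 𝒱 ⥤ 𝒰} {ψ : 𝒲 ⥤ 𝒱} {𝔞 : GradedCat k 𝒰} {𝔟 : GradedCat k 𝒱}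
  {𝔠 : GradedCat k 𝒲}

theorem map_fstarUnit_heq (F : GradedFunctor k φ 𝔟 𝔞) (hF : F.Subcartesian) {n : ℕ}
    (c : RawCochain 𝔞.unit n) (X Y : Sh 𝔟) (p : Pth (Sh 𝔟) n X Y) (e : PthElts 𝔟 p) :
    HEq (F.map _ (FstarUnit F hF c X Y p e)) (c _ _ (p.map (sharpF F)) (eltsMap F e)) :=
  (heq_of_eq (Equiv.apply_symm_apply (Equiv.ofBijective _ (hF _ X.2 Y.2)) _)).trans
    ((𝔞.unit).cst_heq _ _)

theorem fstarUnit_comp (F : GradedFunctor k φ 𝔟 𝔞) (hF : F.Subcartesian)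
    (G : GradedFunctor k ψ 𝔠 𝔟) (hG : G.Subcartesian) {n : ℕ} (c : RawCochain 𝔞.unit n) :
    FstarUnit G hG (FstarUnit F hF c) = FstarUnit (F.comp G) (hF.comp hG) c := by
  funext X Y p e
  -- `FstarUnit` inverts the maps of the functor, so compare images under `(F.comp G).map`.
  apply (hF.comp hG (Sh.base p.comp) X.2 Y.2).1
  refine eq_of_heq ((F.map_congr (base_comp_map_sharpF G p).symm
    (map_fstarUnit_heq G hG _ X Y p e)).trans ?_)
  refine (map_fstarUnit_heq F hF c _ _ _ _).trans ?_
  refine (RawCochain.congr_heq c (Pth.map_map _ _ _) (F.eltsMap_comp_heq G e)).trans ?_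
  exact (map_fstarUnit_heq (F.comp G) _ c X Y p e).symm

theorem fstarUnit_zero (F : GradedFunctor k φ 𝔟 𝔞) (hF : F.Subcartesian) {n : ℕ} :
    FstarUnit F hF (0 : RawCochain 𝔞.unit n) = 0 := by
  funext X Y p e
  apply (hF (Sh.base p.comp) X.2 Y.2).1
  refine eq_of_heq ((map_fstarUnit_heq F hF 0 X Y p e).trans ?_)
  exact (GradedCat.zero_heq (base_comp_map_sharpF F p)).trans (heq_of_eq (F.map_zero _).symm)

theorem fstarUnit_restrictProj_heq (φ : 𝒱 ⥤ 𝒰) {n : ℕ} (c : RawCochain 𝔞.unit n)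
    (X Y : Sh (𝔞.restrict φ)) (p : Pth (Sh (𝔞.restrict φ)) n X Y)
    (e : PthElts (𝔞.restrict φ) p) :
    HEq (res[φ] c X Y p e)
      (c _ _ (p.map (sharpF (restrictProj φ 𝔞))) (eltsMap (restrictProj φ 𝔞) e)) :=
  map_fstarUnit_heq (restrictProj φ 𝔞) (restrictProj_subcartesian φ 𝔞) c X Y p e

end Restriction

abbrev RelCochain {𝔞 : GradedCat k 𝒰} (M : Bimod k 𝔞) (n : ℕ) {W : 𝒰} (B : 𝔞.Obj W)
    (Y : Sh 𝔞) (v : W ⟶ Y.1) : Type u :=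
  ∀ (Z : Sh 𝔞) (q : Pth (Sh 𝔞) n Y Z), PthElts 𝔞 q → M.M (v ≫ Sh.base q.comp) B Z.2

theorem GradedCat.add_eq_of_heq {𝔞 : GradedCat k 𝒰} {X Y : 𝒰} {f g : X ⟶ Y} (hfg : f = g)
    {B : 𝔞.Obj X} {A : 𝔞.Obj Y} {x y z : 𝔞.Hom f B A} {x' y' z' : 𝔞.Hom g B A}
    (hx : HEq x x') (hy : HEq y y') (hz : HEq z z') (h : x' = y' + z') : x = y + z := by
  subst hfg hx hy hz; exact h

theorem GradedCat.smul_eq_of_heq {𝔞 : GradedCat k 𝒰} {X Y : 𝒰} {f g : X ⟶ Y} (hfg : f = g)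
    {B : 𝔞.Obj X} {A : 𝔞.Obj Y} (r : k) {x y : 𝔞.Hom f B A} {x' y' : 𝔞.Hom g B A}
    (hx : HEq x x') (hy : HEq y y') (h : x' = r • y') : x = r • y := by
  subst hfg hx hy; exact h

namespace IsML

variable {𝔞 : GradedCat k 𝒰}

theorem zero {M : Bimod k 𝔞} : ∀ {n : ℕ} {W : 𝒰} {B : 𝔞.Obj W} {Y : Sh 𝔞} {v : W ⟶ Y.1}
    (χ : RelCochain M n B Y v), (∀ Z q e, χ Z q e = 0) → IsML M χ
  | 0, _, _, _, _, _, _ => trivial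
  | _ + 1, _, _, _, _, χ, h0 =>
    ⟨fun _ _ _ _ _ _ _ => by rw [h0, h0, h0, add_zero],
      fun _ _ _ _ _ _ _ => by rw [h0, h0, smul_zero],
      fun _ _ _ => zero _ fun _ _ _ => (congrArg (M.cst _) (h0 _ _ _)).trans (M.cst_zero _)⟩

theorem of_pathwise {M : Bimod k 𝔞} : ∀ {n : ℕ} {W : 𝒰} {B : 𝔞.Obj W} {Y : Sh 𝔞}
    {v : W ⟶ Y.1} {χ χ₁ χ₂ : RelCochain M n B Y v}, IsML M χ₁ → IsML M χ₂ →
    (∀ Z q, (∀ e, χ Z q e = χ₁ Z q e) ∨ (∀ e, χ Z q e = χ₂ Z q e)) → IsML M χ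
  | 0, _, _, _, _, _, _, _, _, _, _ => trivial
  | _ + 1, _, _, _, _, _, _, _, h₁, h₂, h => by
    refine ⟨fun Y' Z a q e x x' => ?_, fun Y' Z a q e r x => ?_, fun Y' a x => ?_⟩
    · rcases h Z (.cons a q) with h | h
      · rw [h, h, h]; exact h₁.1 Y' Z a q e x x'
      · rw [h, h, h]; exact h₂.1 Y' Z a q e x x'
    · rcases h Z (.cons a q) with h | h
      · rw [h, h]; exact h₁.2.1 Y' Z a q e r x
      · rw [h, h]; exact h₂.2.1 Y' Z a q e r x
    · exact of_pathwise (h₁.2.2 Y' a x) (h₂.2.2 Y' a x) fun Z q =>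
        (h Z (.cons a q)).imp (fun h e => by rw [h]) (fun h e => by rw [h])

theorem restrict {φ : 𝒱 ⥤ 𝒰} : ∀ {n : ℕ} {Wr : 𝒱} {B : 𝔞.Obj (φ.obj Wr)}
    {Yr : Sh (𝔞.restrict φ)} {vr : Wr ⟶ Yr.1} {v : φ.obj Wr ⟶ φ.obj Yr.1}
    {χr : RelCochain (𝔞.restrict φ).unit n B Yr vr}
    {χ : RelCochain 𝔞.unit n B ((sharpF (restrictProj φ 𝔞)).obj Yr) v},
    φ.map vr = v → IsML 𝔞.unit χ →
    (∀ Zr qr er, HEq (χr Zr qr er)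
      (χ _ (qr.map (sharpF (restrictProj φ 𝔞))) (eltsMap (restrictProj φ 𝔞) er))) →
    IsML (𝔞.restrict φ).unit χr
  | 0, _, _, _, _, _, _, _, _, _, _ => trivial
  | n + 1, _, _, Yr, vr, v, _, _, hv, hχ, hχr => by
    have hfg : ∀ {Zr} (p : Pth (Sh (𝔞.restrict φ)) (n + 1) Yr Zr),
        φ.map (vr ≫ Sh.base p.comp) = v ≫ Sh.base (p.map (sharpF (restrictProj φ 𝔞))).comp := by
      intros; rw [base_comp_map_sharpF, ← hv, Functor.map_comp]; rfl
    let S := sharpF (restrictProj φ 𝔞)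
    refine ⟨fun Yr' Zr ar qr er x x' => ?_, fun Yr' Zr ar qr er r x => ?_,
      fun Yr' ar x => ?_⟩
    · exact GradedCat.add_eq_of_heq (hfg _) (hχr _ _ _) (hχr _ _ _) (hχr _ _ _)
        (hχ.1 (S.obj Yr') (S.obj Zr) (S.map ar) (qr.map S) (eltsMap _ er) x x')
    · exact GradedCat.smul_eq_of_heq (hfg _) r (hχr _ _ _) (hχr _ _ _)
        (hχ.2.1 (S.obj Yr') (S.obj Zr) (S.map ar) (qr.map S) (eltsMap _ er) r x)
    · refine restrict (by rw [Functor.map_comp, hv]; rfl) (hχ.2.2 (S.obj Yr') (S.map ar) x)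
        fun Zr qr er => ?_
      exact (Bimod.cst_heq _ _ _).trans ((hχr _ _ _).trans (Bimod.cst_heq _ _ _).symm)

theorem extendByZero {𝒮 : Subcat 𝒰} : ∀ {n : ℕ} {Wr : 𝒮.Cat} {B : 𝔞.Obj Wr.1} {Y : Sh 𝔞}
    {hY : 𝒮.objs Y.1} {vr : Wr ⟶ (𝒮.liftObj Y hY).1}
    {χr : RelCochain (𝔞.restrict 𝒮.incl).unit n B (𝒮.liftObj Y hY) vr}
    {χ : RelCochain 𝔞.unit n B Y vr.1}, IsML _ χr →
    (∀ Z q (h : 𝒮.ContainsPth (q.map (Sh.proj 𝔞))) e,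
      HEq (χ Z q e) (χr _ (Subcat.liftPth q h) (Subcat.liftElts e h))) →
    (∀ Z q, ¬ 𝒮.ContainsPth (q.map (Sh.proj 𝔞)) → ∀ e, χ Z q e = 0) →
    IsML 𝔞.unit χ
  | 0, _, _, _, _, _, _, _, _, _, _ => trivial
  | n + 1, _, _, Y, hY, vr, _, _, hχr, hχ, h0 => by
    have hfg : ∀ {Z} (q : Pth (Sh 𝔞) (n + 1) Y Z) (h : 𝒮.ContainsPth (q.map (Sh.proj 𝔞))),
        vr.1 ≫ Sh.base q.comp = 𝒮.incl.map (vr ≫ Sh.base (Subcat.liftPth q h).comp) := by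
      intros; rw [Functor.map_comp, Subcat.incl_map_base_comp_liftPth]; rfl
    refine ⟨fun Y' Z a q e x x' => ?_, fun Y' Z a q e r x => ?_, fun Y' a x => ?_⟩
    · by_cases h : 𝒮.ContainsPth ((Pth.cons a q).map (Sh.proj 𝔞))
      · exact GradedCat.add_eq_of_heq (hfg _ h) (hχ _ _ h _) (hχ _ _ h _) (hχ _ _ h _)
          (hχr.1 (𝒮.liftObj Y' (𝒮.cod_mem _ h.1)) _ ⟨Sh.base a, h.1⟩ (Subcat.liftPth q h.2)
            (Subcat.liftElts e h.2) x x')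
      · rw [h0 _ _ h, h0 _ _ h, h0 _ _ h, add_zero]
    · by_cases h : 𝒮.ContainsPth ((Pth.cons a q).map (Sh.proj 𝔞))
      · exact GradedCat.smul_eq_of_heq (hfg _ h) r (hχ _ _ h _) (hχ _ _ h _)
          (hχr.2.1 (𝒮.liftObj Y' (𝒮.cod_mem _ h.1)) _ ⟨Sh.base a, h.1⟩ (Subcat.liftPth q h.2)
            (Subcat.liftElts e h.2) r x)
      · rw [h0 _ _ h, h0 _ _ h, smul_zero]
    · by_cases ha : 𝒮.homs (Sh.base a)
      · refine extendByZero (hY := 𝒮.cod_mem _ ha) (vr := vr ≫ ⟨Sh.base a, ha⟩)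
          (hχr.2.2 (𝒮.liftObj Y' (𝒮.cod_mem _ ha)) ⟨Sh.base a, ha⟩ x) (fun Z q h e => ?_)
          (fun Z q h e => ?_)
        · exact (Bimod.cst_heq _ _ _).trans
            ((hχ Z (.cons a q) ⟨ha, h⟩ (.cons x e)).trans (Bimod.cst_heq _ _ _).symm)
        · exact (congrArg (Bimod.cst _ _) (h0 Z (.cons a q) (fun h' => h h'.2) _)).trans
            (Bimod.cst_zero _ _)
      -- a first morphism outside `𝒮` leaves every continuation outside `𝒮`
      · exact zero _ fun Z q e =>
          (congrArg (Bimod.cst _ _) (h0 Z (.cons a q) (fun h => ha h.1) _)).trans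
            (Bimod.cst_zero _ _)

end IsML

section ExtendByZero

variable {𝔞 : GradedCat k 𝒰} {n : ℕ}

open scoped Classical in
noncomputable def extendByZero (𝒮 : Subcat 𝒰) (c : RawCochain (𝔞.restrict 𝒮.incl).unit n) :
    RawCochain 𝔞.unit n :=
  fun _ _ q e =>
    if h : 𝒮.ContainsPth (q.map (Sh.proj 𝔞)) then
      𝔞.Hcast (Subcat.incl_map_base_comp_liftPth q h)
        (c _ _ (Subcat.liftPth q h) (Subcat.liftElts e h))
    else 0

variable {𝒮 : Subcat 𝒰}

theorem extendByZero_heq (c : RawCochain (𝔞.restrict 𝒮.incl).unit n) {X Y : Sh 𝔞}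
    {q : Pth (Sh 𝔞) n X Y} (h : 𝒮.ContainsPth (q.map (Sh.proj 𝔞))) (e : PthElts 𝔞 q) :
    HEq (extendByZero 𝒮 c X Y q e) (c _ _ (Subcat.liftPth q h) (Subcat.liftElts e h)) :=
  (heq_of_eq (dif_pos h)).trans (𝔞.Hcast_heq _ _)

theorem extendByZero_of_not_containsPth (c : RawCochain (𝔞.restrict 𝒮.incl).unit n)
    {X Y : Sh 𝔞} {q : Pth (Sh 𝔞) n X Y} (h : ¬ 𝒮.ContainsPth (q.map (Sh.proj 𝔞)))
    (e : PthElts 𝔞 q) : extendByZero 𝒮 c X Y q e = 0 :=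
  dif_neg h

theorem restrict_extendByZero (c : RawCochain (𝔞.restrict 𝒮.incl).unit n) :
    res[𝒮.incl] (extendByZero 𝒮 c) = c := by
  funext X Y p e
  have h := 𝒮.containsPth_sharp_restrictProj 𝔞 p
  exact eq_of_heq ((fstarUnit_restrictProj_heq _ _ X Y p e).trans
    ((extendByZero_heq c h _).trans
      (c.congr_heq (Subcat.liftPth_map p h) (Subcat.liftElts_eltsMap_heq e h))))

theorem extendByZero_restrict (c : RawCochain 𝔞.unit n) {X Y : Sh 𝔞} {q : Pth (Sh 𝔞) n X Y}
    (h : 𝒮.ContainsPth (q.map (Sh.proj 𝔞))) (e : PthElts 𝔞 q) :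
    extendByZero 𝒮 (res[𝒮.incl] c) X Y q e = c X Y q e :=
  eq_of_heq ((extendByZero_heq _ h e).trans ((fstarUnit_restrictProj_heq _ c _ _ _ _).trans
    (c.congr_heq (Subcat.map_liftPth q h) (Subcat.eltsMap_liftElts_heq e h))))

theorem restrict_congr {c c' : RawCochain 𝔞.unit n}
    (h : ∀ X Y q, 𝒮.ContainsPth (q.map (Sh.proj 𝔞)) → ∀ e, c X Y q e = c' X Y q e) :
    res[𝒮.incl] c = res[𝒮.incl] c' := by
  funext X Y p e
  exact eq_of_heq ((fstarUnit_restrictProj_heq _ c X Y p e).trans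
    ((heq_of_eq (h _ _ _ (𝒮.containsPth_sharp_restrictProj 𝔞 p) _)).trans
      (fstarUnit_restrictProj_heq _ c' X Y p e).symm))

end ExtendByZero

namespace IsCochain

variable {𝔞 : GradedCat k 𝒰} {n : ℕ}

theorem zero (M : Bimod k 𝔞) : IsCochain M (0 : RawCochain M n) :=
  fun _ => IsML.zero _ fun _ _ _ => M.cst_zero _

theorem of_pathwise {M : Bimod k 𝔞} {c c₁ c₂ : RawCochain M n} (h₁ : IsCochain M c₁)
    (h₂ : IsCochain M c₂)
    (h : ∀ X Y q, (∀ e, c X Y q e = c₁ X Y q e) ∨ (∀ e, c X Y q e = c₂ X Y q e)) :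
    IsCochain M c :=
  fun X => IsML.of_pathwise (h₁ X) (h₂ X) fun Z q =>
    (h X Z q).imp (fun h e => congrArg (M.cst _) (h e)) (fun h e => congrArg (M.cst _) (h e))

theorem restrict (φ : 𝒱 ⥤ 𝒰) {c : RawCochain 𝔞.unit n} (hc : IsCochain 𝔞.unit c) :
    IsCochain (𝔞.restrict φ).unit (res[φ] c) :=
  fun _ => IsML.restrict (φ.map_id _) (hc _) fun _ _ _ => (Bimod.cst_heq _ _ _).trans
    ((fstarUnit_restrictProj_heq φ c _ _ _ _).trans (Bimod.cst_heq _ _ _).symm)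

theorem extendByZero {𝒮 : Subcat 𝒰} {c : RawCochain (𝔞.restrict 𝒮.incl).unit n}
    (hc : IsCochain _ c) : IsCochain 𝔞.unit (extendByZero 𝒮 c) := by
  intro X
  by_cases hX : 𝒮.objs X.1
  · refine IsML.extendByZero (hY := hX) (vr := 𝟙 _) (hc (𝒮.liftObj X hX))
      (fun Z q h e => ?_) (fun Z q h e => ?_)
    · exact (Bimod.cst_heq _ _ _).trans
        ((extendByZero_heq c h e).trans (Bimod.cst_heq _ _ _).symm)
    · exact (congrArg (Bimod.cst _ _) (extendByZero_of_not_containsPth c h e)).trans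
        (Bimod.cst_zero _ _)
  · exact IsML.zero _ fun Z q e =>
      (congrArg (Bimod.cst _ _) (extendByZero_of_not_containsPth c
        (fun h => hX h.src_mem) e)).trans (Bimod.cst_zero _ _)

end IsCochain

def Subcat.IsInftyCover (𝒮 𝒯 : Subcat 𝒰) : Prop :=
  ∀ (m : ℕ) (s : NerveTot 𝒰 m),
    (∃ t : NerveTot 𝒮.Cat m, NerveTot.map 𝒮.incl t = s) ∨
    (∃ t : NerveTot 𝒯.Cat m, NerveTot.map 𝒯.incl t = s)

theorem Subcat.IsInftyCover.containsPth {𝒮 𝒯 : Subcat 𝒰} (hcov : 𝒮.IsInftyCover 𝒯)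
    {𝔞 : GradedCat k 𝒰} {m : ℕ} {X Y : Sh 𝔞} (q : Pth (Sh 𝔞) m X Y) :
    𝒮.ContainsPth (q.map (Sh.proj 𝔞)) ∨ 𝒯.ContainsPth (q.map (Sh.proj 𝔞)) :=
  (hcov m ⟨X.1, Y.1, q.map (Sh.proj 𝔞)⟩).imp
    (fun ⟨_, ht⟩ => Subcat.containsPth_of_map_incl_eq ht)
    (fun ⟨_, ht⟩ => Subcat.containsPth_of_map_incl_eq ht)

section MayerVietoris

variable {𝔞 : GradedCat k 𝒰} (𝒮 𝒯 : Subcat 𝒰) {n : ℕ}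

theorem interRes₁_restrict (c : RawCochain 𝔞.unit n) :
    FstarUnit (interRes₁ 𝒮 𝒯 𝔞) (interRes₁_subcartesian 𝒮 𝒯 𝔞)
      (res[𝒮.incl] c) = res[(𝒮.inter 𝒯).incl] c :=
  fstarUnit_comp _ _ _ _ c

theorem interRes₂_restrict (c : RawCochain 𝔞.unit n) :
    FstarUnit (interRes₂ 𝒮 𝒯 𝔞) (interRes₂_subcartesian 𝒮 𝒯 𝔞)
      (res[𝒯.incl] c) = res[(𝒮.inter 𝒯).incl] c :=
  fstarUnit_comp _ _ _ _ c

variable {𝒮 𝒯}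

theorem extendByZero_eq_of_interRes_eq {c₁ : RawCochain (𝔞.restrict 𝒮.incl).unit n}
    {c₂ : RawCochain (𝔞.restrict 𝒯.incl).unit n}
    (h₁₂ : FstarUnit (interRes₁ 𝒮 𝒯 𝔞) (interRes₁_subcartesian 𝒮 𝒯 𝔞) c₁ =
      FstarUnit (interRes₂ 𝒮 𝒯 𝔞) (interRes₂_subcartesian 𝒮 𝒯 𝔞) c₂)
    {X Y : Sh 𝔞} {q : Pth (Sh 𝔞) n X Y} (h𝒮 : 𝒮.ContainsPth (q.map (Sh.proj 𝔞)))
    (h𝒯 : 𝒯.ContainsPth (q.map (Sh.proj 𝔞))) (e : PthElts 𝔞 q) :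
    extendByZero 𝒮 c₁ X Y q e = extendByZero 𝒯 c₂ X Y q e := by
  have h : (𝒮.inter 𝒯).ContainsPth (q.map (Sh.proj 𝔞)) :=
    (Subcat.containsPth_inter_iff 𝒮 𝒯 _).2 ⟨h𝒮, h𝒯⟩
  have hres : res[(𝒮.inter 𝒯).incl] (extendByZero 𝒮 c₁) =
      res[(𝒮.inter 𝒯).incl] (extendByZero 𝒯 c₂) := by
    rw [← interRes₁_restrict, ← interRes₂_restrict, restrict_extendByZero,
      restrict_extendByZero, h₁₂]
  rw [← extendByZero_restrict (extendByZero 𝒮 c₁) h e, hres, extendByZero_restrict _ h e]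

theorem eq_of_restrict_eq (hcov : 𝒮.IsInftyCover 𝒯) {c c' : RawCochain 𝔞.unit n}
    (h𝒮 : res[𝒮.incl] c = res[𝒮.incl] c') (h𝒯 : res[𝒯.incl] c = res[𝒯.incl] c') :
    c = c' := by
  funext X Y q e
  rcases hcov.containsPth q with h | h
  · rw [← extendByZero_restrict c h e, h𝒮, extendByZero_restrict c' h e]
  · rw [← extendByZero_restrict c h e, h𝒯, extendByZero_restrict c' h e]

theorem exists_restrict_eq_of_interRes_eq (c₁ : RawCochain (𝔞.restrict 𝒮.incl).unit n)
    (c₂ : RawCochain (𝔞.restrict 𝒯.incl).unit n) (hc₁ : IsCochain _ c₁) (hc₂ : IsCochain _ c₂)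
    (h₁₂ : FstarUnit (interRes₁ 𝒮 𝒯 𝔞) (interRes₁_subcartesian 𝒮 𝒯 𝔞) c₁ =
      FstarUnit (interRes₂ 𝒮 𝒯 𝔞) (interRes₂_subcartesian 𝒮 𝒯 𝔞) c₂) :
    ∃ c : RawCochain 𝔞.unit n, IsCochain 𝔞.unit c ∧ res[𝒮.incl] c = c₁ ∧ res[𝒯.incl] c = c₂ := by
  classical
  refine ⟨fun X Y q e => if 𝒮.ContainsPth (q.map (Sh.proj 𝔞)) then extendByZero 𝒮 c₁ X Y q e
    else extendByZero 𝒯 c₂ X Y q e, ?_, ?_, ?_⟩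
  · refine hc₁.extendByZero.of_pathwise hc₂.extendByZero fun X Y q => ?_
    by_cases h : 𝒮.ContainsPth (q.map (Sh.proj 𝔞))
    · exact Or.inl fun e => if_pos h
    · exact Or.inr fun e => if_neg h
  · exact (restrict_congr fun X Y q h e => if_pos h).trans (restrict_extendByZero c₁)
  · refine (restrict_congr fun X Y q h𝒯 e => ?_).trans (restrict_extendByZero c₂)
    by_cases h𝒮 : 𝒮.ContainsPth (q.map (Sh.proj 𝔞))
    · exact (if_pos h𝒮).trans (extendByZero_eq_of_interRes_eq h₁₂ h𝒮 h𝒯 e)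
    · exact if_neg h𝒮

theorem exists_interRes_sub_eq (c₀ : RawCochain (𝔞.restrict (𝒮.inter 𝒯).incl).unit n)
    (hc₀ : IsCochain _ c₀) :
    ∃ (c₁ : RawCochain (𝔞.restrict 𝒮.incl).unit n) (c₂ : RawCochain (𝔞.restrict 𝒯.incl).unit n),
      IsCochain _ c₁ ∧ IsCochain _ c₂ ∧
      FstarUnit (interRes₂ 𝒮 𝒯 𝔞) (interRes₂_subcartesian 𝒮 𝒯 𝔞) c₂ -
        FstarUnit (interRes₁ 𝒮 𝒯 𝔞) (interRes₁_subcartesian 𝒮 𝒯 𝔞) c₁ = c₀ :=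
  ⟨0, _, IsCochain.zero _, hc₀.extendByZero.restrict 𝒯.incl, by
    rw [fstarUnit_zero, sub_zero, interRes₂_restrict, restrict_extendByZero]⟩

end MayerVietoris

/-- Let `𝔞` be a `𝒰`-graded category and `φ₁ : 𝒱₁ ⊆ 𝒰`, `φ₂ : 𝒱₂ ⊆ 𝒰` subcategories
which together constitute an `∞`-cover of `𝒰` (every `k`-simplex of `𝒩(𝒰)` lies in the
image of `𝒩ₖ(𝒱₁)` or of `𝒩ₖ(𝒱₂)`).  Then the Mayer–Vietoris sequence
`0 → C_𝒰(𝔞) → C_{𝒱₁}(𝔞^{φ₁}) ⊕ C_{𝒱₂}(𝔞^{φ₂}) → C_{𝒱₁ ∩ 𝒱₂}(𝔞^{φ}) → 0`,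
with first map `(φ₁*, φ₂*)` and second map `(−α₁*, α₂*)`, is exact (in every degree). -/
theorem statement15 {k : Type u} [CommRing k] {𝒰 : Type u} [Category.{u} 𝒰]
    (𝔞 : GradedCat k 𝒰) (𝒮 𝒯 : Subcat 𝒰)
    (hcov : ∀ (m : ℕ) (s : NerveTot 𝒰 m),
      (∃ t : NerveTot 𝒮.Cat m, NerveTot.map 𝒮.incl t = s) ∨
      (∃ t : NerveTot 𝒯.Cat m, NerveTot.map 𝒯.incl t = s))
    (n : ℕ) :
    -- exactness at `C_𝒰(𝔞)`: the map `(φ₁*, φ₂*)` is injective on Hochschild cochains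
    (∀ c c' : RawCochain 𝔞.unit n, IsCochain 𝔞.unit c → IsCochain 𝔞.unit c' →
      FstarUnit (restrictProj 𝒮.incl 𝔞) (restrictProj_subcartesian 𝒮.incl 𝔞) c =
        FstarUnit (restrictProj 𝒮.incl 𝔞) (restrictProj_subcartesian 𝒮.incl 𝔞) c' →
      FstarUnit (restrictProj 𝒯.incl 𝔞) (restrictProj_subcartesian 𝒯.incl 𝔞) c =
        FstarUnit (restrictProj 𝒯.incl 𝔞) (restrictProj_subcartesian 𝒯.incl 𝔞) c' →
      c = c') ∧
    -- exactness in the middle: `(c₁, c₂)` is killed by `(−α₁*, α₂*)` iff it comes from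
    -- a cochain on `(𝒰, 𝔞)`
    (∀ (c₁ : RawCochain (𝔞.restrict 𝒮.incl).unit n)
      (c₂ : RawCochain (𝔞.restrict 𝒯.incl).unit n),
      IsCochain (𝔞.restrict 𝒮.incl).unit c₁ → IsCochain (𝔞.restrict 𝒯.incl).unit c₂ →
      FstarUnit (interRes₁ 𝒮 𝒯 𝔞) (interRes₁_subcartesian 𝒮 𝒯 𝔞) c₁ =
        FstarUnit (interRes₂ 𝒮 𝒯 𝔞) (interRes₂_subcartesian 𝒮 𝒯 𝔞) c₂ →
      ∃ c : RawCochain 𝔞.unit n, IsCochain 𝔞.unit c ∧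
        FstarUnit (restrictProj 𝒮.incl 𝔞) (restrictProj_subcartesian 𝒮.incl 𝔞) c = c₁ ∧
        FstarUnit (restrictProj 𝒯.incl 𝔞) (restrictProj_subcartesian 𝒯.incl 𝔞) c = c₂) ∧
    -- exactness at the right: the map `(−α₁*, α₂*)` is surjective
    (∀ c₀ : RawCochain (𝔞.restrict (𝒮.inter 𝒯).incl).unit n,
      IsCochain (𝔞.restrict (𝒮.inter 𝒯).incl).unit c₀ →
      ∃ (c₁ : RawCochain (𝔞.restrict 𝒮.incl).unit n)
        (c₂ : RawCochain (𝔞.restrict 𝒯.incl).unit n),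
        IsCochain (𝔞.restrict 𝒮.incl).unit c₁ ∧
        IsCochain (𝔞.restrict 𝒯.incl).unit c₂ ∧
        FstarUnit (interRes₂ 𝒮 𝒯 𝔞) (interRes₂_subcartesian 𝒮 𝒯 𝔞) c₂ -
          FstarUnit (interRes₁ 𝒮 𝒯 𝔞) (interRes₁_subcartesian 𝒮 𝒯 𝔞) c₁ = c₀) :=
  ⟨fun _ _ _ _ => eq_of_restrict_eq hcov, exists_restrict_eq_of_interRes_eq,
    exists_interRes_sub_eq⟩

end MapGr
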